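/- arXiv:2505.07789 — 3 statements merged into one kernel-verified Lean document; each statement's English description precedes it below -/
import Mathlib

section
/- If A = (A,∧,∨,·,1,∼,−) is a complete perfect distributive InFL-algebra, then the map ψ : A → Up(J∞(A), ≼) defined by ψ(a) = {j ∈ J∞(A) : j ≤ a} is an isomorphism from A onto the complex algebra (A_+)^+ of its dual frame A_+; in particular ψ is a lattice isomorphism with ψ(1) = I₁, ψ(a·b) = ψ(a)∘ψ(b), ψ(∼a) = ∼ψ(a), and ψ(−a) = −ψ(a). -/
/-- An involutive FL-algebra (InFL-algebra) structure on a lattice: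
a monoid operation with residuation law (Res) expressed via the two
linear negations `lneg` (∼) and `rneg` (−), which are inverse involutions. -/
structure InFL (A : Type*) [Lattice A] where
  mul : A → A → A
  one : A
  mul_assoc : ∀ a b c : A, mul (mul a b) c = mul a (mul b c)
  one_mul : ∀ a : A, mul one a = a
  mul_one : ∀ a : A, mul a one = a
  lneg : A → A
  rneg : A → A
  res_left : ∀ a b c : A, mul a b ≤ c ↔ a ≤ rneg (mul b (lneg c))
  res_right : ∀ a b c : A, mul a b ≤ c ↔ b ≤ lneg (mul (rneg c) a)
  rneg_lneg : ∀ a : A, rneg (lneg a) = a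
  lneg_rneg : ∀ a : A, lneg (rneg a) = a

/-- The sum operation `a + b := −(∼b · ∼a)` of an InFL-algebra. -/
def InFL.sum {A : Type*} [Lattice A] (S : InFL A) (a b : A) : A :=
  S.rneg (S.mul (S.lneg b) (S.lneg a))

/-- A quasi relation algebra: a De Morgan InFL-algebra satisfying (Dp):
`¬(a·b) = ¬a + ¬b`. -/
structure QRA (A : Type*) [Lattice A] extends InFL A where
  neg : A → A
  neg_neg : ∀ a : A, neg (neg a) = a
  dm : ∀ a b : A, neg (a ⊓ b) = neg a ⊔ neg b
  dp : ∀ a b : A, neg (mul a b) = rneg (mul (lneg (neg b)) (lneg (neg a)))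

/-- Completely join-irreducible element of a complete lattice. -/
def CJI {A : Type*} [CompleteLattice A] (j : A) : Prop :=
  ∀ S : Set A, j = sSup S → j ∈ S

/-- Completely meet-irreducible element of a complete lattice. -/
def CMI {A : Type*} [CompleteLattice A] (m : A) : Prop :=
  ∀ S : Set A, m = sInf S → m ∈ S

/-- A complete lattice is perfect if the completely join-irreducibles are join-dense
and the completely meet-irreducibles are meet-dense. -/
def PerfectLattice (A : Type*) [CompleteLattice A] : Prop :=
  ∀ a : A, a = sSup {j | CJI j ∧ j ≤ a} ∧ a = sInf {m | CMI m ∧ a ≤ m}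

/-- The map `κ(j) = ⋁ {a : j ≰ a}`. -/
def kappa {A : Type*} [CompleteLattice A] (j : A) : A :=
  sSup {a | ¬ j ≤ a}

/-- Extension of a binary set-operation `c : W → W → Set W` to subsets:
`U ∘ V = ⋃ { x ∘ y : x ∈ U, y ∈ V }`. -/
def setComp {W : Type*} (c : W → W → Set W) (U V : Set W) : Set W :=
  {z | ∃ x ∈ U, ∃ y ∈ V, z ∈ c x y}

/-- A DInFL-frame `(W, I, ≼, ∘, ∼, −)`. -/
structure DInFLFrame (W : Type*) where
  I : Set W
  le : W → W → Prop
  le_refl : ∀ x, le x x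
  le_trans : ∀ x y z, le x y → le y z → le x z
  le_antisymm : ∀ x y, le x y → le y x → x = y
  comp : W → W → Set W
  tld : W → W
  mns : W → W
  ax1 : ∀ x y, (le x y ↔ y ∈ setComp comp I {x}) ∧ (le x y ↔ y ∈ setComp comp {x} I)
  ax2 : ∀ x y, le x y → x ∈ I → y ∈ I
  ax3 : ∀ u v x y, le x y → x ∈ comp u v → y ∈ comp u v
  ax4 : ∀ x y z, setComp comp (comp x y) {z} = setComp comp {x} (comp y z)
  ax5 : ∀ x y z, tld z ∈ comp x y ↔ mns y ∈ comp z x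
  ax6 : ∀ x, le (mns (tld x)) x ∧ le (tld (mns x)) x

/-- Upsets of the underlying poset of a DInFL-frame. -/
def DInFLFrame.IsUpset {W : Type*} (F : DInFLFrame W) (U : Set W) : Prop :=
  ∀ x y, F.le x y → x ∈ U → y ∈ U

/-- The operation `∼U = {w : w⁻ ∉ U}` of the complex algebra. -/
def DInFLFrame.sneg {W : Type*} (F : DInFLFrame W) (U : Set W) : Set W :=
  {w | F.mns w ∉ U}

/-- The operation `−U = {w : w^∼ ∉ U}` of the complex algebra. -/
def DInFLFrame.mneg {W : Type*} (F : DInFLFrame W) (U : Set W) : Set W :=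
  {w | F.tld w ∉ U}

/-- The map `ψ(a) = {j ∈ J∞(A) : j ≤ a}`. -/
def psiMap {A : Type*} [CompleteLattice A] (a : A) : Set {a : A // CJI a} :=
  {j | j.1 ≤ a}

/-- Upsets of `(J∞(A), ≼)` where `j ≼ k ⟺ k ≤ j`. -/
def IsJUpset {A : Type*} [CompleteLattice A] (U : Set {a : A // CJI a}) : Prop :=
  ∀ j k : {a : A // CJI a}, k.1 ≤ j.1 → j ∈ U → k ∈ U

/-!
In a distributive complete lattice whose completely meet-irreducibles are meet-dense, every
completely join-irreducible `j` satisfies `j ≰ κ(j)`: the join `s` of all `a ⊓ j` with `j ≰ a`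
lies strictly below `j`, so some completely meet-irreducible `m ≥ s` misses `j`, and since `m`
is meet-prime every `a` with `j ≰ a` lies below `m`. Hence `j` is completely join-prime, which
makes `ψ` preserve joins and hit every upset. By residuation the product preserves joins in
each argument, so a join-prime below `a · b` lies below `j · k` for join-irreducibles
`j ≤ a`, `k ≤ b`. For the negations, `j ≤ a ↔ a ≰ κ(j)` combines with the Galois connection
`a ≤ −b ↔ b ≤ ∼a`.
-/

namespace CMI

variable {A : Type*} [CompleteLattice A]

theorem le_or_le_of_inf_le (hdist : ∀ a b c : A, a ⊓ (b ⊔ c) = (a ⊓ b) ⊔ (a ⊓ c))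
    {m : A} (hm : CMI m) {a b : A} (h : a ⊓ b ≤ m) : a ≤ m ∨ b ≤ m := by
  have hm_eq : m = sInf {a ⊔ m, b ⊔ m} := by
    refine le_antisymm (le_sInf ?_) ?_
    · rintro x (rfl | rfl) <;> exact le_sup_right
    · rw [sInf_pair, hdist, inf_comm (a ⊔ m) b, hdist]
      exact sup_le (sup_le (inf_comm b a ▸ h) inf_le_right) inf_le_right
  simpa [eq_comm (a := m)] using hm _ hm_eq

end CMI

namespace CJI

variable {A : Type*} [CompleteLattice A]

theorem not_le_kappa (hmeet : ∀ a : A, a = sInf {m | CMI m ∧ a ≤ m})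
    (hdist : ∀ a b c : A, a ⊓ (b ⊔ c) = (a ⊓ b) ⊔ (a ⊓ c)) {j : A} (hj : CJI j) :
    ¬ j ≤ kappa j := by
  set s := sSup ((· ⊓ j) '' {a | ¬ j ≤ a})
  have hs_lt : s < j := by
    refine lt_of_le_of_ne (sSup_le ?_) fun h => ?_
    · rintro _ ⟨a, -, rfl⟩
      exact inf_le_right
    · obtain ⟨a, hja, hj_eq⟩ := hj _ h.symm
      exact hja (hj_eq.ge.trans inf_le_left)
  obtain ⟨m, hm, hsm, hjm⟩ : ∃ m, CMI m ∧ s ≤ m ∧ ¬ j ≤ m := by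
    by_contra! h
    exact hs_lt.not_ge ((le_sInf fun m hm => h m hm.1 hm.2).trans_eq (hmeet s).symm)
  have hkappa : kappa j ≤ m := sSup_le fun a hja =>
    have haj : a ⊓ j ≤ m := (le_sSup (Set.mem_image_of_mem (· ⊓ j) hja)).trans hsm
    (hm.le_or_le_of_inf_le hdist haj).resolve_right hjm
  exact fun h => hjm (h.trans hkappa)

theorem le_iff_not_le_kappa (hmeet : ∀ a : A, a = sInf {m | CMI m ∧ a ≤ m})
    (hdist : ∀ a b c : A, a ⊓ (b ⊔ c) = (a ⊓ b) ⊔ (a ⊓ c)) {j : A} (hj : CJI j) (a : A) :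
    j ≤ a ↔ ¬ a ≤ kappa j :=
  ⟨fun h hk => hj.not_le_kappa hmeet hdist (h.trans hk), Not.imp_symm fun hja => le_sSup hja⟩

theorem exists_le_of_le_sSup (hmeet : ∀ a : A, a = sInf {m | CMI m ∧ a ≤ m})
    (hdist : ∀ a b c : A, a ⊓ (b ⊔ c) = (a ⊓ b) ⊔ (a ⊓ c)) {j : A} (hj : CJI j) {T : Set A}
    (h : j ≤ sSup T) : ∃ t ∈ T, j ≤ t := by
  by_contra! hT
  exact hj.not_le_kappa hmeet hdist (h.trans (sSup_le fun t ht => le_sSup (hT t ht)))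

theorem le_or_le_of_le_sup (hdist : ∀ a b c : A, a ⊓ (b ⊔ c) = (a ⊓ b) ⊔ (a ⊓ c)) {j : A}
    (hj : CJI j) {a b : A} (h : j ≤ a ⊔ b) : j ≤ a ∨ j ≤ b := by
  have hj_eq : j = sSup {j ⊓ a, j ⊓ b} := by rw [sSup_pair, ← hdist, inf_eq_left.mpr h]
  simpa using hj _ hj_eq

end CJI

namespace InFL

section Lattice

variable {A : Type*} [Lattice A] (S : InFL A)

theorem gc_mul_right (b : A) :
    GaloisConnection (S.mul · b) fun c => S.rneg (S.mul b (S.lneg c)) :=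
  fun a c => S.res_left a b c

theorem gc_mul_left (a : A) :
    GaloisConnection (S.mul a ·) fun c => S.lneg (S.mul (S.rneg c) a) :=
  fun b c => S.res_right a b c

theorem mul_le_mul {a a' b b' : A} (ha : a ≤ a') (hb : b ≤ b') : S.mul a b ≤ S.mul a' b' :=
  ((S.gc_mul_right b).monotone_l ha).trans ((S.gc_mul_left a').monotone_l hb)

theorem rneg_one_eq_lneg_one : S.rneg S.one = S.lneg S.one := by
  apply le_antisymm
  · have h := (S.res_right (S.rneg S.one) S.one (S.lneg S.one)).mpr
      (by rw [S.rneg_lneg, S.one_mul, S.lneg_rneg])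
    rwa [S.mul_one] at h
  · have h := (S.res_left S.one (S.lneg S.one) (S.rneg S.one)).mpr
      (by rw [S.lneg_rneg, S.mul_one, S.rneg_lneg])
    rwa [S.one_mul] at h

theorem le_rneg_iff_le_lneg (a b : A) : a ≤ S.rneg b ↔ b ≤ S.lneg a := by
  have h₁ := S.res_left a b (S.rneg S.one)
  have h₂ := S.res_right a b (S.lneg S.one)
  rw [S.lneg_rneg, S.mul_one] at h₁
  rw [S.rneg_lneg, S.one_mul, ← S.rneg_one_eq_lneg_one] at h₂
  exact h₁.symm.trans h₂

theorem rneg_le_iff (a b : A) : S.rneg a ≤ b ↔ S.lneg b ≤ a := by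
  conv_lhs => rw [← S.rneg_lneg b]
  rw [S.le_rneg_iff_le_lneg, S.lneg_rneg]

theorem lneg_le_iff (a b : A) : S.lneg a ≤ b ↔ S.rneg b ≤ a := by
  conv_lhs => rw [← S.lneg_rneg b]
  rw [← S.le_rneg_iff_le_lneg, S.rneg_lneg]

end Lattice

variable {A : Type*} [CompleteLattice A] (S : InFL A)

theorem sSup_mul (T : Set A) (b : A) : S.mul (sSup T) b = sSup ((S.mul · b) '' T) := by
  rw [sSup_image]
  exact (S.gc_mul_right b).l_sSup

theorem mul_sSup (a : A) (T : Set A) : S.mul a (sSup T) = sSup ((S.mul a ·) '' T) := by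
  rw [sSup_image]
  exact (S.gc_mul_left a).l_sSup

end InFL

section psiMap

variable {A : Type*} [CompleteLattice A]

theorem CJI.exists_le_mul (S : InFL A) (hjoin : ∀ a : A, a = sSup {j | CJI j ∧ j ≤ a})
    (hmeet : ∀ a : A, a = sInf {m | CMI m ∧ a ≤ m})
    (hdist : ∀ a b c : A, a ⊓ (b ⊔ c) = (a ⊓ b) ⊔ (a ⊓ c)) {c : A} (hc : CJI c) {a b : A}
    (h : c ≤ S.mul a b) : ∃ j k, CJI j ∧ j ≤ a ∧ CJI k ∧ k ≤ b ∧ c ≤ S.mul j k := by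
  rw [hjoin a, S.sSup_mul] at h
  obtain ⟨_, ⟨j, ⟨hj, hja⟩, rfl⟩, hcj⟩ := hc.exists_le_of_le_sSup hmeet hdist h
  beta_reduce at hcj
  rw [hjoin b, S.mul_sSup] at hcj
  obtain ⟨_, ⟨k, ⟨hk, hkb⟩, rfl⟩, hck⟩ := hc.exists_le_of_le_sSup hmeet hdist hcj
  exact ⟨j, k, hj, hja, hk, hkb, hck⟩

theorem isJUpset_psiMap (a : A) : IsJUpset (psiMap a) :=
  fun _ _ hkj hj => hkj.trans hj

theorem psiMap_subset_psiMap_iff (hjoin : ∀ a : A, a = sSup {j | CJI j ∧ j ≤ a}) (a b : A) :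
    psiMap a ⊆ psiMap b ↔ a ≤ b :=
  ⟨fun h => (hjoin a).trans_le (sSup_le fun j hj => h (show ⟨j, hj.1⟩ ∈ psiMap a from hj.2)),
    fun h _ hj => le_trans hj h⟩

theorem psiMap_injective (hjoin : ∀ a : A, a = sSup {j | CJI j ∧ j ≤ a}) :
    Function.Injective (psiMap (A := A)) := fun a b h =>
  le_antisymm ((psiMap_subset_psiMap_iff hjoin a b).1 h.le)
    ((psiMap_subset_psiMap_iff hjoin b a).1 h.ge)

theorem exists_psiMap_eq_of_isJUpset (hmeet : ∀ a : A, a = sInf {m | CMI m ∧ a ≤ m})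
    (hdist : ∀ a b c : A, a ⊓ (b ⊔ c) = (a ⊓ b) ⊔ (a ⊓ c)) {U : Set {a : A // CJI a}}
    (hU : IsJUpset U) : ∃ a : A, psiMap a = U := by
  refine ⟨sSup (Subtype.val '' U),
    Set.ext fun k => ⟨fun hk => ?_, fun hk => le_sSup ⟨k, hk, rfl⟩⟩⟩
  obtain ⟨_, ⟨j, hjU, rfl⟩, hkj⟩ := k.2.exists_le_of_le_sSup hmeet hdist hk
  exact hU j k hkj hjU

theorem psiMap_inf (a b : A) : psiMap (a ⊓ b) = psiMap a ∩ psiMap b :=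
  Set.ext fun _ => le_inf_iff

theorem psiMap_sup (hdist : ∀ a b c : A, a ⊓ (b ⊔ c) = (a ⊓ b) ⊔ (a ⊓ c)) (a b : A) :
    psiMap (a ⊔ b) = psiMap a ∪ psiMap b :=
  Set.ext fun j =>
    ⟨j.2.le_or_le_of_le_sup hdist, fun h => h.elim le_sup_of_le_left le_sup_of_le_right⟩

theorem psiMap_mul (S : InFL A) (hjoin : ∀ a : A, a = sSup {j | CJI j ∧ j ≤ a})
    (hmeet : ∀ a : A, a = sInf {m | CMI m ∧ a ≤ m})
    (hdist : ∀ a b c : A, a ⊓ (b ⊔ c) = (a ⊓ b) ⊔ (a ⊓ c)) (a b : A) :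
    psiMap (S.mul a b) =
      setComp (fun j k => {c : {a : A // CJI a} | c.1 ≤ S.mul j.1 k.1}) (psiMap a) (psiMap b) := by
  ext c
  constructor
  · intro hc
    obtain ⟨j, k, hj, hja, hk, hkb, hcjk⟩ := c.2.exists_le_mul S hjoin hmeet hdist hc
    exact ⟨⟨j, hj⟩, hja, ⟨k, hk⟩, hkb, hcjk⟩
  · rintro ⟨j, hja, k, hkb, hcjk⟩
    exact hcjk.trans (S.mul_le_mul hja hkb)

theorem psiMap_lneg (S : InFL A) (hmeet : ∀ a : A, a = sInf {m | CMI m ∧ a ≤ m})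
    (hdist : ∀ a b c : A, a ⊓ (b ⊔ c) = (a ⊓ b) ⊔ (a ⊓ c)) (a : A) :
    psiMap (S.lneg a) = {j : {a : A // CJI a} | ¬ S.rneg (kappa j.1) ≤ a} :=
  Set.ext fun j =>
    (j.2.le_iff_not_le_kappa hmeet hdist _).trans (not_congr (S.rneg_le_iff _ _)).symm

theorem psiMap_rneg (S : InFL A) (hmeet : ∀ a : A, a = sInf {m | CMI m ∧ a ≤ m})
    (hdist : ∀ a b c : A, a ⊓ (b ⊔ c) = (a ⊓ b) ⊔ (a ⊓ c)) (a : A) :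
    psiMap (S.rneg a) = {j : {a : A // CJI a} | ¬ S.lneg (kappa j.1) ≤ a} :=
  Set.ext fun j =>
    (j.2.le_iff_not_le_kappa hmeet hdist _).trans (not_congr (S.lneg_le_iff _ _)).symm

end psiMap

/-- A complete perfect distributive InFL-algebra is isomorphic, via
`ψ(a) = {j ∈ J∞(A) : j ≤ a}`, to the complex algebra `(A₊)⁺` of its dual frame:
`ψ` is a lattice isomorphism onto the upsets of `(J∞(A),≼)` which sends `1` to `I₁`,
`·` to `∘`, `∼` to `∼` and `−` to `−`. -/
theorem perfect_DInFL_iso_complex_algebra {A : Type*} [CompleteLattice A]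
    (S : InFL A) (hperf : PerfectLattice A)
    (hdist : ∀ a b c : A, a ⊓ (b ⊔ c) = (a ⊓ b) ⊔ (a ⊓ c)) :
    (∀ a : A, IsJUpset (psiMap a)) ∧
    Function.Injective (psiMap (A := A)) ∧
    (∀ U, IsJUpset U → ∃ a : A, psiMap a = U) ∧
    (∀ a b : A, a ≤ b ↔ psiMap a ⊆ psiMap b) ∧
    (∀ a b : A, psiMap (a ⊓ b) = psiMap a ∩ psiMap b) ∧
    (∀ a b : A, psiMap (a ⊔ b) = psiMap a ∪ psiMap b) ∧
    psiMap S.one = {i : {a : A // CJI a} | i.1 ≤ S.one} ∧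
    (∀ a b : A, psiMap (S.mul a b) =
      setComp (fun j k => {c : {a : A // CJI a} | c.1 ≤ S.mul j.1 k.1})
        (psiMap a) (psiMap b)) ∧
    (∀ a : A, psiMap (S.lneg a) = {j : {a : A // CJI a} | ¬ S.rneg (kappa j.1) ≤ a}) ∧
    (∀ a : A, psiMap (S.rneg a) = {j : {a : A // CJI a} | ¬ S.lneg (kappa j.1) ≤ a}) := by
  have hjoin : ∀ a : A, a = sSup {j | CJI j ∧ j ≤ a} := fun a => (hperf a).1
  have hmeet : ∀ a : A, a = sInf {m | CMI m ∧ a ≤ m} := fun a => (hperf a).2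
  exact ⟨isJUpset_psiMap, psiMap_injective hjoin,
    fun _ hU => exists_psiMap_eq_of_isJUpset hmeet hdist hU,
    fun a b => (psiMap_subset_psiMap_iff hjoin a b).symm, psiMap_inf, psiMap_sup hdist, rfl,
    psiMap_mul S hjoin hmeet hdist, psiMap_lneg S hmeet hdist, psiMap_rneg S hmeet hdist⟩
end

section
/- If W = (W, I, ≼, ∘, ∼, −) is a DInFL-frame, then the map x ↦ ↑x = {y ∈ W : x ≼ y} is an isomorphism from W onto the dual frame (W^+)_+ of its complex algebra W^+: it is an order-isomorphism from (W,≼) onto (J∞(W^+), ⊇), and x ∈ I iff ↑x ∈ I_I, z ∈ x∘y iff ↑z ∈ ↑x∘↑y in (W^+)_+, ↑(x^∼) = (↑x)^∼, and ↑(x^−) = (↑x)^−. -/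
/-- The principal upset `↑x = {y : x ≼ y}`. -/
def DInFLFrame.up {W : Type*} (F : DInFLFrame W) (x : W) : Set W :=
  {y | F.le x y}

/-- `U` is a completely join-irreducible element of the complete lattice of
upsets of the frame (where joins of upsets are unions). -/
def DInFLFrame.IsCJIUpset {W : Type*} (F : DInFLFrame W) (U : Set W) : Prop :=
  F.IsUpset U ∧ ∀ 𝒮 : Set (Set W), (∀ V ∈ 𝒮, F.IsUpset V) → U = ⋃₀ 𝒮 → U ∈ 𝒮

/-- `κ(↑x) = ⋃ {U ∈ Up(W) : ↑x ⊄ U}`, computed in the complex algebra. -/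
def DInFLFrame.kappaUp {W : Type*} (F : DInFLFrame W) (x : W) : Set W :=
  ⋃₀ {U | F.IsUpset U ∧ ¬ F.up x ⊆ U}

/-!
Every upset is the union of the principal upsets of its elements, so the completely
join-irreducible upsets are exactly the principal ones, and `κ(↑x)` is the complement of
`↓x`. Axioms (5) and (6) make `∼` and `−` mutually inverse antitone bijections, which
turns `∼κ(↑x)` and `−κ(↑x)` into `↑x^∼` and `↑x^−`. For the composition, associativity
together with axioms (1) and (3) shows that `∘` is antitone in each argument, so
`↑z ⊆ ↑x ∘ ↑y` already forces `z ∈ x ∘ y`.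
-/

namespace DInFLFrame

variable {W : Type*} (F : DInFLFrame W)

lemma le_iff_exists_mem_comp_left {x y : W} : F.le x y ↔ ∃ i ∈ F.I, y ∈ F.comp i x := by
  rw [(F.ax1 x y).1]
  constructor
  · rintro ⟨i, hi, _, rfl, h⟩; exact ⟨i, hi, h⟩
  · rintro ⟨i, hi, h⟩; exact ⟨i, hi, x, rfl, h⟩

lemma le_iff_exists_mem_comp_right {x y : W} : F.le x y ↔ ∃ i ∈ F.I, y ∈ F.comp x i := by
  rw [(F.ax1 x y).2]
  constructor
  · rintro ⟨_, rfl, i, hi, h⟩; exact ⟨i, hi, h⟩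
  · rintro ⟨i, hi, h⟩; exact ⟨x, rfl, i, hi, h⟩

lemma mns_tld (x : W) : F.mns (F.tld x) = x := by
  refine F.le_antisymm _ _ (F.ax6 x).1 ?_
  obtain ⟨i, hi, h⟩ := F.le_iff_exists_mem_comp_left.mp (F.le_refl (F.tld x))
  exact F.le_iff_exists_mem_comp_right.mpr ⟨i, hi, (F.ax5 i (F.tld x) x).mp h⟩

lemma tld_mns (x : W) : F.tld (F.mns x) = x := by
  refine F.le_antisymm _ _ (F.ax6 x).2 ?_
  obtain ⟨i, hi, h⟩ := F.le_iff_exists_mem_comp_right.mp (F.le_refl (F.mns x))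
  exact F.le_iff_exists_mem_comp_left.mpr ⟨i, hi, (F.ax5 i x (F.mns x)).mpr h⟩

lemma mns_le_mns {x y : W} (h : F.le x y) : F.le (F.mns y) (F.mns x) := by
  obtain ⟨i, hi, hy⟩ := F.le_iff_exists_mem_comp_left.mp h
  rw [← F.tld_mns y] at hy
  exact F.le_iff_exists_mem_comp_right.mpr ⟨i, hi, (F.ax5 i x (F.mns y)).mp hy⟩

lemma tld_le_tld {x y : W} (h : F.le x y) : F.le (F.tld y) (F.tld x) := by
  obtain ⟨i, hi, hy⟩ := F.le_iff_exists_mem_comp_right.mp h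
  rw [← F.mns_tld y] at hy
  exact F.le_iff_exists_mem_comp_left.mpr ⟨i, hi, (F.ax5 i (F.tld y) x).mpr hy⟩

lemma tld_le_iff_mns_le {x w : W} : F.le (F.tld x) w ↔ F.le (F.mns w) x :=
  ⟨fun h => F.mns_tld x ▸ F.mns_le_mns h, fun h => F.tld_mns w ▸ F.tld_le_tld h⟩

lemma mns_le_iff_tld_le {x w : W} : F.le (F.mns x) w ↔ F.le (F.tld w) x :=
  ⟨fun h => F.tld_mns x ▸ F.tld_le_tld h, fun h => F.mns_tld w ▸ F.mns_le_mns h⟩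

lemma mem_up_self (x : W) : x ∈ F.up x := F.le_refl x

lemma up_isUpset (x : W) : F.IsUpset (F.up x) :=
  fun a b hab ha => F.le_trans x a b ha hab

lemma up_subset_of_mem {U : Set W} (hU : F.IsUpset U) {x : W} (hx : x ∈ U) : F.up x ⊆ U :=
  fun _ hy => hU x _ hy hx

lemma up_subset_up_iff {x y : W} : F.up y ⊆ F.up x ↔ F.le x y :=
  ⟨fun h => h (F.mem_up_self y), fun h => F.up_subset_of_mem (F.up_isUpset x) h⟩

lemma up_injective : Function.Injective F.up := fun x y h =>
  F.le_antisymm x y (F.up_subset_up_iff.mp h.ge) (F.up_subset_up_iff.mp h.le)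

lemma isCJIUpset_up (x : W) : F.IsCJIUpset (F.up x) := by
  refine ⟨F.up_isUpset x, fun 𝒮 h𝒮 hx => ?_⟩
  obtain ⟨V, hV, hxV⟩ : x ∈ ⋃₀ 𝒮 := hx ▸ F.mem_up_self x
  have hVx : V ⊆ F.up x := hx ▸ Set.subset_sUnion_of_mem hV
  rwa [← hVx.antisymm (F.up_subset_of_mem (h𝒮 V hV) hxV)]

lemma sUnion_up_eq {U : Set W} (hU : F.IsUpset U) : ⋃₀ (F.up '' U) = U :=
  Set.sUnion_subset (Set.forall_mem_image.mpr fun _ => F.up_subset_of_mem hU) |>.antisymm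
    fun x hx => ⟨F.up x, Set.mem_image_of_mem _ hx, F.mem_up_self x⟩

lemma exists_eq_up_of_isCJIUpset {U : Set W} (hU : F.IsCJIUpset U) : ∃ x, U = F.up x := by
  obtain ⟨x, -, hx⟩ := hU.2 (F.up '' U) (Set.forall_mem_image.mpr fun x _ => F.up_isUpset x)
    (F.sUnion_up_eq hU.1).symm
  exact ⟨x, hx.symm⟩

lemma mem_I_iff_up_subset {x : W} : x ∈ F.I ↔ F.up x ⊆ F.I :=
  ⟨fun hx _ hy => F.ax2 x _ hy hx, fun h => h (F.mem_up_self x)⟩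

lemma mem_comp_of_le_left {x x' y z : W} (hx : F.le x x') (h : z ∈ F.comp x' y) :
    z ∈ F.comp x y := by
  obtain ⟨i, hi, hx'⟩ := F.le_iff_exists_mem_comp_left.mp hx
  have hz : z ∈ setComp F.comp (F.comp i x) {y} := ⟨x', hx', y, rfl, h⟩
  rw [F.ax4] at hz
  obtain ⟨_, rfl, w, hw, hwz⟩ := hz
  exact F.ax3 x y w z (F.le_iff_exists_mem_comp_left.mpr ⟨_, hi, hwz⟩) hw

lemma mem_comp_of_le_right {x y y' z : W} (hy : F.le y y') (h : z ∈ F.comp x y') :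
    z ∈ F.comp x y := by
  obtain ⟨i, hi, hy'⟩ := F.le_iff_exists_mem_comp_right.mp hy
  have hz : z ∈ setComp F.comp {x} (F.comp y i) := ⟨x, rfl, y', hy', h⟩
  rw [← F.ax4] at hz
  obtain ⟨w, hw, _, rfl, hwz⟩ := hz
  exact F.ax3 x y w z (F.le_iff_exists_mem_comp_right.mpr ⟨_, hi, hwz⟩) hw

lemma mem_comp_iff_up_subset {x y z : W} :
    z ∈ F.comp x y ↔ F.up z ⊆ setComp F.comp (F.up x) (F.up y) := by
  refine ⟨fun h w hw => ⟨x, F.mem_up_self x, y, F.mem_up_self y, F.ax3 x y z w hw h⟩,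
    fun h => ?_⟩
  obtain ⟨x', hx, y', hy, hz⟩ := h (F.mem_up_self z)
  exact F.mem_comp_of_le_left hx (F.mem_comp_of_le_right hy hz)

lemma mem_kappaUp {x w : W} : w ∈ F.kappaUp x ↔ ¬ F.le w x := by
  constructor
  · rintro ⟨U, ⟨hU, hxU⟩, hw⟩ hwx
    exact hxU (F.up_subset_of_mem hU (hU w x hwx hw))
  · exact fun h => ⟨F.up w, ⟨F.up_isUpset w, fun hs => h (hs (F.mem_up_self x))⟩,
      F.mem_up_self w⟩

lemma up_tld (x : W) : F.up (F.tld x) = F.sneg (F.kappaUp x) := by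
  ext w
  simp only [up, sneg, Set.mem_ofPred_eq, mem_kappaUp, not_not, tld_le_iff_mns_le]

lemma up_mns (x : W) : F.up (F.mns x) = F.mneg (F.kappaUp x) := by
  ext w
  simp only [up, mneg, Set.mem_ofPred_eq, mem_kappaUp, not_not, mns_le_iff_tld_le]

end DInFLFrame

/-- A DInFL-frame is isomorphic, via `x ↦ ↑x`, to the dual frame `(W⁺)₊` of its
complex algebra: `x ↦ ↑x` is an order-isomorphism of `(W,≼)` onto
`(J∞(W⁺), ⊇)`, and it preserves `I`, `∘`, `∼` and `−`. -/
theorem frame_iso_dual_of_complex {W : Type*} (F : DInFLFrame W) :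
    (∀ x, F.IsCJIUpset (F.up x)) ∧
    (∀ U, F.IsCJIUpset U → ∃ x, U = F.up x) ∧
    Function.Injective F.up ∧
    (∀ x y, F.le x y ↔ F.up y ⊆ F.up x) ∧
    (∀ x, x ∈ F.I ↔ F.up x ⊆ F.I) ∧
    (∀ x y z, z ∈ F.comp x y ↔ F.up z ⊆ setComp F.comp (F.up x) (F.up y)) ∧
    (∀ x, F.up (F.tld x) = F.sneg (F.kappaUp x)) ∧
    (∀ x, F.up (F.mns x) = F.mneg (F.kappaUp x)) :=
  ⟨F.isCJIUpset_up, fun _ => F.exists_eq_up_of_isCJIUpset, F.up_injective,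
    fun _ _ => F.up_subset_up_iff.symm, fun _ => F.mem_I_iff_up_subset,
    fun _ _ _ => F.mem_comp_iff_up_subset, F.up_tld, F.up_mns⟩
end

section
/- Let A and B be complete perfect distributive InFL-algebras and h : A → B a complete homomorphism. Then: (i) for every b ∈ B, b ≤ h(⋀ h⁻¹[↑b]); (ii) if a ∈ A, b ∈ B and b ≤ h(a), then ⋀ h⁻¹[↑b] ≤ a; (iii) if b is completely join-irreducible in B, then ⋀ h⁻¹[↑b] is completely join-irreducible in A; (iv) if a ∈ A, b is completely join-irreducible in B, and ⋀ h⁻¹[↑b] ≤ a, then b ≤ h(a). -/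
/-- A complete homomorphism between complete (perfect distributive)
InFL-algebras: it preserves arbitrary joins and meets as well as
`·`, `1`, `∼` and `−`. -/
def IsCompleteInFLHom {A B : Type*} [CompleteLattice A] [CompleteLattice B]
    (SA : InFL A) (SB : InFL B) (h : A → B) : Prop :=
  (∀ S : Set A, h (sSup S) = sSup (h '' S)) ∧
  (∀ S : Set A, h (sInf S) = sInf (h '' S)) ∧
  (∀ a b : A, h (SA.mul a b) = SB.mul (h a) (h b)) ∧
  h SA.one = SB.one ∧
  (∀ a : A, h (SA.lneg a) = SB.lneg (h a)) ∧
  (∀ a : A, h (SA.rneg a) = SB.rneg (h a))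


/-!
Since `h` preserves arbitrary meets, `b ↦ ⋀ h⁻¹[↑b]` is its lower adjoint, which gives (i), (ii)
and (iv). For (iii), in a perfect distributive lattice every completely join-irreducible `j` is
completely join-prime: meet-density yields a completely meet-irreducible `m` above everything
strictly below `j` but not above `j`, and distributivity makes `m` meet-prime, so `m` lies above
every element not above `j`. So if `⋀ h⁻¹[↑b] = ⋁ S`, then `b ≤ h(⋁ S) = ⋁ h[S]` gives
`b ≤ h(s)`, i.e. `⋀ h⁻¹[↑b] ≤ s`, for some `s ∈ S`.
-/

section

variable {α β : Type*} [CompleteLattice α] [CompleteLattice β]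

def CompletelyJoinPrime (j : α) : Prop :=
  ∀ S : Set α, j ≤ sSup S → ∃ s ∈ S, j ≤ s

theorem CMI.le_or_le_of_inf_le_s14 (hdist : ∀ a b c : α, a ⊓ (b ⊔ c) = (a ⊓ b) ⊔ (a ⊓ c))
    {m a b : α} (hm : CMI m) (hab : a ⊓ b ≤ m) : a ≤ m ∨ b ≤ m := by
  have hm_eq : m = sInf {m ⊔ a, m ⊔ b} := by
    rw [sInf_pair]
    refine le_antisymm (le_inf le_sup_left le_sup_left) ?_
    rw [hdist, inf_comm _ b, hdist]
    exact sup_le inf_le_right (sup_le inf_le_right (inf_comm b a ▸ hab))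
  rcases hm _ hm_eq with h | h
  · exact .inl (le_sup_right.trans_eq h.symm)
  · exact .inr (le_sup_right.trans_eq (Set.mem_singleton_iff.mp h).symm)

theorem PerfectLattice.exists_cmi_ge_not_le (hperf : PerfectLattice α) {x y : α}
    (hxy : ¬ x ≤ y) : ∃ m, CMI m ∧ y ≤ m ∧ ¬ x ≤ m := by
  by_contra! hcon
  exact hxy ((le_sInf fun m hm => hcon m hm.1 hm.2).trans_eq (hperf y).2.symm)

theorem CJI.sSup_lt {j : α} (hj : CJI j) : sSup {a | a < j} < j :=
  (sSup_le fun _ => le_of_lt).lt_of_ne fun h => lt_irrefl j (hj {a | a < j} h.symm)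

theorem CJI.completelyJoinPrime (hperf : PerfectLattice α)
    (hdist : ∀ a b c : α, a ⊓ (b ⊔ c) = (a ⊓ b) ⊔ (a ⊓ c)) {j : α} (hj : CJI j) :
    CompletelyJoinPrime j := by
  intro S hjS
  by_contra! hS
  obtain ⟨m, hm, hbelow, hjm⟩ := hperf.exists_cmi_ge_not_le hj.sSup_lt.not_ge
  have hle_m : ∀ a, ¬ j ≤ a → a ≤ m := fun x hx =>
    have hxj : x ⊓ j < j := inf_le_right.lt_of_ne fun h => hx (inf_eq_right.mp h)
    (hm.le_or_le_of_inf_le_s14 hdist ((le_sSup (s := {a | a < j}) hxj).trans hbelow)).resolve_right hjm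
  exact hjm (hjS.trans (sSup_le fun s hs => hle_m s (hS s hs)))

theorem monotone_of_map_sInf {f : α → β} (hf : ∀ S : Set α, f (sInf S) = sInf (f '' S)) :
    Monotone f := fun a b hab => by
  have hfab := hf {a, b}
  rw [sInf_pair, inf_eq_left.mpr hab, Set.image_pair, sInf_pair] at hfab
  exact hfab.trans_le inf_le_right

theorem galoisConnection_of_map_sInf {f : α → β}
    (hf : ∀ S : Set α, f (sInf S) = sInf (f '' S)) :
    GaloisConnection (fun b => sInf {a | b ≤ f a}) f := by
  intro b a
  refine ⟨fun hba => ?_, fun hb => sInf_le hb⟩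
  have hb : b ≤ f (sInf {a | b ≤ f a}) := by
    rw [hf]
    exact le_sInf (Set.forall_mem_image.mpr fun _ h => h)
  exact hb.trans (monotone_of_map_sInf hf hba)

theorem GaloisConnection.cji_l_of_completelyJoinPrime {l : β → α} {u : α → β}
    (gc : GaloisConnection l u) (hu : ∀ S : Set α, u (sSup S) = sSup (u '' S)) {b : β}
    (hb : CompletelyJoinPrime b) : CJI (l b) := by
  intro S hS
  have hb_le : b ≤ sSup (u '' S) := hu S ▸ hS ▸ gc.le_u_l b
  obtain ⟨_, ⟨s, hs, rfl⟩, hbs⟩ := hb _ hb_le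
  have hs_eq : l b = s := le_antisymm (gc.l_le hbs) (hS ▸ le_sSup hs)
  exact hs_eq ▸ hs

end

theorem complete_hom_inf_preimage_general {A B : Type*}
    [CompleteLattice A] [CompleteLattice B]
    (SA : InFL A) (SB : InFL B)
    (hperfB : PerfectLattice B)
    (hdistB : ∀ a b c : B, a ⊓ (b ⊔ c) = (a ⊓ b) ⊔ (a ⊓ c))
    (h : A → B) (hh : IsCompleteInFLHom SA SB h) :
    (∀ b : B, b ≤ h (sInf {a : A | b ≤ h a})) ∧
    (∀ (a : A) (b : B), b ≤ h a → sInf {x : A | b ≤ h x} ≤ a) ∧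
    (∀ b : B, CJI b → CJI (sInf {a : A | b ≤ h a})) ∧
    (∀ (a : A) (b : B), CJI b → sInf {x : A | b ≤ h x} ≤ a → b ≤ h a) := by
  obtain ⟨hsup, hinf, -⟩ := hh
  have gc := galoisConnection_of_map_sInf hinf
  exact ⟨gc.le_u_l, fun _ _ => gc.l_le,
    fun _ hb => gc.cji_l_of_completelyJoinPrime hsup (hb.completelyJoinPrime hperfB hdistB),
    fun _ _ _ => gc.le_u⟩

/-- For a complete homomorphism `h` between complete perfect distributive
InFL-algebras: (i) `b ≤ h(⋀ h⁻¹[↑b])`; (ii) if `b ≤ h(a)` then `⋀ h⁻¹[↑b] ≤ a`;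
(iii) `⋀ h⁻¹[↑b]` is completely join-irreducible whenever `b` is;
(iv) if `b` is completely join-irreducible and `⋀ h⁻¹[↑b] ≤ a` then `b ≤ h(a)`. -/
theorem complete_hom_inf_preimage {A B : Type*}
    [CompleteLattice A] [CompleteLattice B]
    (SA : InFL A) (SB : InFL B)
    (hperfA : PerfectLattice A) (hperfB : PerfectLattice B)
    (hdistA : ∀ a b c : A, a ⊓ (b ⊔ c) = (a ⊓ b) ⊔ (a ⊓ c))
    (hdistB : ∀ a b c : B, a ⊓ (b ⊔ c) = (a ⊓ b) ⊔ (a ⊓ c))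
    (h : A → B) (hh : IsCompleteInFLHom SA SB h) :
    (∀ b : B, b ≤ h (sInf {a : A | b ≤ h a})) ∧
    (∀ (a : A) (b : B), b ≤ h a → sInf {x : A | b ≤ h x} ≤ a) ∧
    (∀ b : B, CJI b → CJI (sInf {a : A | b ≤ h a})) ∧
    (∀ (a : A) (b : B), CJI b → sInf {x : A | b ≤ h x} ≤ a → b ≤ h a) :=
  complete_hom_inf_preimage_general SA SB hperfB hdistB h hh
end
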